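/- Let T be a positive invertible element of a unital C*-algebra with m·1 ≤ T ≤ M·1 ≤ 1 for real numbers 0 < m ≤ M ≤ 1, and let λ ∈ [0,1]. Then (1-λ)T + λ·1 - T^{1-λ} ≤ D·1, where D = max over t ∈ [m, M] of λ(1-λ)(log t)². -/

import Mathlib

/-! Write `s = 1 - λ` and a spectral value of `T` as `x = exp (-u)` with `u ≥ 0`. The scalar defect
`g u = s exp (-u) + (1 - s) - exp (-s u)` vanishes at `0` and has derivative
`s (exp (-s u) - exp (-u)) ≤ s (1 - s) u`, so the mean value theorem gives
`g u ≤ s (1 - s) u² = λ (1 - λ) (log x)²`. The operator inequality follows through the continuous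
functional calculus, since the spectrum of `T` lies in `[m, M] ⊆ (0, 1]`. -/

open Real Set

lemma exp_neg_sub_exp_neg_le_sub {a b : ℝ} (ha : 0 ≤ a) (hab : a ≤ b) :
    exp (-a) - exp (-b) ≤ b - a := by
  have hsplit : exp (-b) = exp (-a) * exp (-(b - a)) := by rw [← exp_add]; ring_nf
  have ha_le : exp (-a) ≤ 1 := exp_le_one_iff.mpr (by linarith)
  have hgap_ge : 1 - (b - a) ≤ exp (-(b - a)) := by linarith [add_one_le_exp (-(b - a))]
  have hgap_le : exp (-(b - a)) ≤ 1 := exp_le_one_iff.mpr (by linarith)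
  rw [hsplit]
  nlinarith [exp_pos (-a)]

lemma weighted_mean_sub_exp_le {s u : ℝ} (hs₀ : 0 ≤ s) (hs₁ : s ≤ 1) (hu : 0 ≤ u) :
    s * exp (-u) + (1 - s) - exp (-(s * u)) ≤ s * (1 - s) * u ^ 2 := by
  rcases hu.eq_or_lt with rfl | hu
  · simp
  set g : ℝ → ℝ := fun v ↦ s * exp (-v) + (1 - s) - exp (-(s * v))
  have hg : ∀ v, HasDerivAt g (s * (exp (-(s * v)) - exp (-v))) v := by
    intro v
    have h₁ := ((hasDerivAt_neg v).exp.const_mul s).add_const (1 - s)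
    have h₂ := ((hasDerivAt_id' v).const_mul s).fun_neg.exp
    exact (h₁.sub h₂).congr_deriv (by ring)
  obtain ⟨c, ⟨hc₀, hcu⟩, hc⟩ := exists_hasDerivAt_eq_slope g _ hu
    (fun v _ ↦ (hg v).continuousAt.continuousWithinAt) (fun v _ ↦ hg v)
  have hg₀ : g 0 = 0 := by simp [g]
  have hslope : g u = s * (exp (-(s * c)) - exp (-c)) * u := by
    rw [hc, hg₀]; field_simp; ring
  have hderiv : exp (-(s * c)) - exp (-c) ≤ (1 - s) * u := by
    have := exp_neg_sub_exp_neg_le_sub (mul_nonneg hs₀ hc₀.le) (mul_le_of_le_one_left hc₀.le hs₁)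
    nlinarith [mul_le_mul_of_nonneg_left hcu.le (sub_nonneg.mpr hs₁)]
  calc g u = s * (exp (-(s * c)) - exp (-c)) * u := hslope
    _ ≤ s * ((1 - s) * u) * u := by gcongr
    _ = s * (1 - s) * u ^ 2 := by ring

lemma affine_sub_rpow_le_mul_log_sq {l x : ℝ} (hl₀ : 0 ≤ l) (hl₁ : l ≤ 1) (hx₀ : 0 < x)
    (hx₁ : x ≤ 1) : (1 - l) * x + l - x ^ (1 - l) ≤ l * (1 - l) * log x ^ 2 := by
  have h := weighted_mean_sub_exp_le (s := 1 - l) (u := -log x) (by linarith) (by linarith)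
    (neg_nonneg.mpr (log_nonpos hx₀.le hx₁))
  rw [neg_neg, exp_log hx₀, ← mul_neg, neg_neg] at h
  rw [rpow_def_of_pos hx₀, mul_comm (log x)]
  convert h using 1 <;> ring

section CStarAlgebra

variable {A : Type*} [CStarAlgebra A] [PartialOrder A] [StarOrderedRing A]

lemma spectrum_subset_Icc_of_smul_one_le {a : A} {m M : ℝ} (ha : IsSelfAdjoint a)
    (hm : m • (1 : A) ≤ a) (hM : a ≤ M • (1 : A)) : spectrum ℝ a ⊆ Icc m M := by
  rw [← Algebra.algebraMap_eq_smul_one] at hm hM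
  exact fun x hx ↦ ⟨(algebraMap_le_iff_le_spectrum ha).mp hm x hx,
    (le_algebraMap_iff_spectrum_le ha).mp hM x hx⟩

lemma smul_add_smul_one_sub_rpow_eq_cfc {a : A} (ha : 0 ≤ a) (c d : ℝ) {p : ℝ} (hp : 0 ≤ p) :
    c • a + d • (1 : A) - a ^ p = cfc (fun x : ℝ ↦ c * x + d - x ^ p) a := by
  have hcont : Continuous (fun x : ℝ ↦ x ^ p) := continuous_rpow_const hp
  rw [cfc_sub _ _ a, cfc_add (a := a) (fun x : ℝ ↦ c * x) (fun _ ↦ d), cfc_const_mul_id c a,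
    cfc_const d a, ← CFC.rpow_eq_cfc_real ha, Algebra.algebraMap_eq_smul_one]

end CStarAlgebra

theorem stmt_7_general {A : Type*} [CStarAlgebra A] [PartialOrder A] [StarOrderedRing A]
    (T : A) (hT : 0 ≤ T)
    (m M lam D : ℝ) (hm : 0 < m) (hM1 : M ≤ 1)
    (hmT : m • (1 : A) ≤ T) (hTM : T ≤ M • (1 : A))
    (hlam : lam ∈ Set.Icc (0 : ℝ) 1)
    (hD : IsGreatest ((fun t : ℝ => lam * (1 - lam) * (Real.log t) ^ 2) '' Set.Icc m M) D) :
    (1 - lam) • T + lam • (1 : A) - T ^ (1 - lam) ≤ D • (1 : A) := by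
  have hspec := spectrum_subset_Icc_of_smul_one_le hT.isSelfAdjoint hmT hTM
  have hexp : 0 ≤ 1 - lam := sub_nonneg.mpr hlam.2
  have hcont : Continuous (fun x : ℝ ↦ x ^ (1 - lam)) := continuous_rpow_const hexp
  rw [smul_add_smul_one_sub_rpow_eq_cfc hT _ _ hexp,
    ← Algebra.algebraMap_eq_smul_one, cfc_le_algebraMap_iff _ _ T]
  intro x hx
  obtain ⟨hmx, hxM⟩ := hspec hx
  calc (1 - lam) * x + lam - x ^ (1 - lam) ≤ lam * (1 - lam) * log x ^ 2 :=
        affine_sub_rpow_le_mul_log_sq hlam.1 hlam.2 (hm.trans_le hmx) (hxM.trans hM1)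
    _ ≤ D := hD.2 ⟨x, ⟨hmx, hxM⟩, rfl⟩

/-- Let `T` be a positive invertible element of a unital C*-algebra with
`m·1 ≤ T ≤ M·1 ≤ 1` for reals `0 < m ≤ M ≤ 1`, and let `λ ∈ [0,1]`. Then
`(1-λ)T + λ·1 - T^(1-λ) ≤ D·1`, where `D` is the maximum of
`t ↦ λ(1-λ)(log t)²` over `t ∈ [m, M]`. -/
theorem stmt_7 {A : Type*} [CStarAlgebra A] [PartialOrder A] [StarOrderedRing A]
    (T : A) (hT : 0 ≤ T) (hTunit : IsUnit T)
    (m M lam D : ℝ) (hm : 0 < m) (hmM : m ≤ M) (hM1 : M ≤ 1)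
    (hmT : m • (1 : A) ≤ T) (hTM : T ≤ M • (1 : A))
    (hlam : lam ∈ Set.Icc (0 : ℝ) 1)
    (hD : IsGreatest ((fun t : ℝ => lam * (1 - lam) * (Real.log t) ^ 2) '' Set.Icc m M) D) :
    (1 - lam) • T + lam • (1 : A) - T ^ (1 - lam) ≤ D • (1 : A) :=
  stmt_7_general T hT m M lam D hm hM1 hmT hTM hlam hD
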